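/- Let d ≥ 2, let (X_1, …, X_d) be a Latin hypercube sample of N = d points in [0,1)^d, let ε ∈ (0, 1/d), and set D = [0, (d−1)/d + ε)^d \ [0, (d−1)/d)^d. Let E be the event that for every i ∈ {0, …, d−1} there exists j ∈ {1, …, d} with π_j(i) = d−1, where π_1, …, π_d are the permutations used in the construction of the sample. Then P(X_i ∈ D | E) = dε for every i ∈ {1, …, d}, and P(X_1 ∈ D, …, X_d ∈ D | E) = (dε)^d. -/

import Mathlib

/-!
Each permutation `π_j` puts exactly one point in the top stratum `d - 1` of coordinate `j`. On `E`
every point is put there by some coordinate, so `j ↦ π_j⁻¹(d - 1)` is a bijection and each point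
`n` is in the top stratum of exactly one coordinate `j n`. Given `π = σ`, the other coordinates of
`X_n` lie below `(d - 1)/d`, so `X_n ∈ D` iff `U_{n, j n} < dε`. By independence,
`P(π = σ, X_n ∈ D for n ∈ S) = (d!)^{-d} (dε)^{|S|}` for every `σ` in `E`, and summing over such
`σ` gives `P(X_n ∈ D for n ∈ S | E) = (dε)^{|S|}`.
-/

open MeasureTheory ProbabilityTheory Filter
open scoped ENNReal Classical

namespace LHSPaper

/-- The anchored box `[0,a) = ∏_i [0, a_i)` in `[0,1)^d`. -/
def anchoredBox {d : ℕ} (a : Fin d → ℝ) : Set (Fin d → ℝ) := {x | ∀ i, x i ∈ Set.Ico 0 (a i)}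

/-- `C^d_0`, the collection of anchored boxes `[0,a)` with `a ∈ [0,1]^d`. -/
def anchoredBoxes (d : ℕ) : Set (Set (Fin d → ℝ)) :=
  {S | ∃ a : Fin d → ℝ, (∀ i, a i ∈ Set.Icc (0 : ℝ) 1) ∧ S = anchoredBox a}

/-- `D^d_0`, the collection of differences `B \ A` of anchored boxes. -/
def boxDiffs (d : ℕ) : Set (Set (Fin d → ℝ)) :=
  {S | ∃ A ∈ anchoredBoxes d, ∃ B ∈ anchoredBoxes d, S = B \ A}

/-- The half-open unit cube `[0,1)^d`. -/
def unitCube (d : ℕ) : Set (Fin d → ℝ) := {x | ∀ i, x i ∈ Set.Ico (0 : ℝ) 1}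

/-- `γ`-negative dependence of the indicators of the events `A 1, …, A N`. -/
def GammaNegDep {Ω : Type*} [MeasurableSpace Ω] (μ : Measure Ω) {N : ℕ}
    (γ : ℝ≥0∞) (A : Fin N → Set Ω) : Prop :=
  ∀ J : Finset (Fin N), J.Nonempty →
    μ (⋂ j ∈ J, A j) ≤ γ * ∏ j ∈ J, μ (A j) ∧
    μ (⋂ j ∈ J, (A j)ᶜ) ≤ γ * ∏ j ∈ J, μ (A j)ᶜ

/-- The `𝒮`-correlation number of a random point tuple `X`. -/
noncomputable def corrNum {Ω : Type*} [MeasurableSpace Ω] (μ : Measure Ω) {N d : ℕ}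
    (𝒮 : Set (Set (Fin d → ℝ))) (X : Fin N → Ω → Fin d → ℝ) : ℝ≥0∞ :=
  ⨆ (S : Set (Fin d → ℝ)) (_ : S ∈ 𝒮) (J : Finset (Fin N)) (_ : J.Nonempty),
    max (μ (⋂ j ∈ J, {ω | X j ω ∈ S}) / ∏ j ∈ J, μ {ω | X j ω ∈ S})
        (μ (⋂ j ∈ J, {ω | X j ω ∉ S}) / ∏ j ∈ J, μ {ω | X j ω ∉ S})

instance (N : ℕ) : MeasurableSpace (Equiv.Perm (Fin N)) := ⊤

instance (N : ℕ) : Nonempty (Equiv.Perm (Fin N)) := ⟨Equiv.refl _⟩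

/-- Value types of the sources of randomness of a Latin hypercube sample:
`d` random permutations and `N·d` random reals. -/
def lhsβ (d N : ℕ) : (Fin d ⊕ (Fin N × Fin d)) → Type :=
  fun i => Sum.elim (fun _ => Equiv.Perm (Fin N)) (fun _ => ℝ) i

noncomputable def lhsMS (d N : ℕ) : (i : Fin d ⊕ (Fin N × Fin d)) → MeasurableSpace (lhsβ d N i) :=
  fun i => match i with
  | .inl _ => ⊤
  | .inr _ => inferInstanceAs (MeasurableSpace ℝ)

def lhsFun {Ω : Type*} {d N : ℕ} (π : Fin d → Ω → Equiv.Perm (Fin N))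
    (U : Fin N → Ω → Fin d → ℝ) : (i : Fin d ⊕ (Fin N × Fin d)) → Ω → lhsβ d N i :=
  fun i => match i with
  | .inl j => π j
  | .inr p => fun ω => U p.1 ω p.2

/-- `X` is a Latin hypercube sample of `N` points in `[0,1)^d`, built from the
uniformly distributed random permutations `π_j` and the uniformly distributed
random variables `U_{n,j}`, all mutually independent. -/
def IsLHS {Ω : Type*} [MeasurableSpace Ω] (μ : Measure Ω) (d N : ℕ)
    (X : Fin N → Ω → Fin d → ℝ)
    (π : Fin d → Ω → Equiv.Perm (Fin N)) (U : Fin N → Ω → Fin d → ℝ) : Prop :=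
  (∀ j, Measure.map (π j) μ = (PMF.uniformOfFintype (Equiv.Perm (Fin N))).toMeasure) ∧
  (∀ n j, Measure.map (fun ω => U n ω j) μ = volume.restrict (Set.Ico (0 : ℝ) 1)) ∧
  iIndepFun (m := lhsMS d N) (lhsFun π U) μ ∧
  (∀ n j ω, X n ω j = (((π j ω) n : ℕ) + U n ω j) / N)

/-- An elementary interval in base `b` of order `k` in `[0,1)^d`. -/
def IsElemInterval (b d k : ℕ) (E : Set (Fin d → ℝ)) : Prop :=
  ∃ ℓ : Fin d → ℕ, ∃ a : Fin d → ℕ, (∀ i, a i < b ^ ℓ i) ∧ (∑ i, ℓ i = k) ∧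
    E = {x | ∀ i, x i ∈ Set.Ico ((a i : ℝ) / b ^ ℓ i) (((a i : ℝ) + 1) / b ^ ℓ i)}

/-- A `(t,m,d)`-net in base `b`: `b^m` points in `[0,1)^d` such that every elementary
interval of order `m - t` contains exactly `b^t` points (with multiplicity). -/
def IsNet (b d m t : ℕ) (P : Fin (b ^ m) → Fin d → ℝ) : Prop :=
  (∀ n, P n ∈ unitCube d) ∧
  ∀ E : Set (Fin d → ℝ), IsElemInterval b d (m - t) E →
    (Finset.univ.filter fun n => P n ∈ E).card = b ^ t

/-- A `b`-ary scrambling of depth `ℓ`: a self-map of `[0,1)` mapping, for each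
`k ∈ {1,…,ℓ}`, elementary intervals of order `k` into elementary intervals of order `k`,
distinct ones into distinct ones. -/
def IsScrambling (b ℓ : ℕ) (σ : ℝ → ℝ) : Prop :=
  (∀ x ∈ Set.Ico (0 : ℝ) 1, σ x ∈ Set.Ico (0 : ℝ) 1) ∧
  ∀ k, 1 ≤ k → k ≤ ℓ → ∃ f : ℕ → ℕ,
    (∀ a < b ^ k, f a < b ^ k) ∧
    (∀ a < b ^ k, ∀ a' < b ^ k, a ≠ a' → f a ≠ f a') ∧
    (∀ a < b ^ k, ∀ x ∈ Set.Ico ((a : ℝ) / b ^ k) (((a : ℝ) + 1) / b ^ k),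
      σ x ∈ Set.Ico ((f a : ℝ) / b ^ k) (((f a : ℝ) + 1) / b ^ k))

/-- A basic cube of an abstract scrambled `(t,m,d)`-net in base `b`. -/
def IsBasicCube (b d m t : ℕ) (C : Set (Fin d → ℝ)) : Prop :=
  ∃ k : Fin d → ℕ, (∀ j, k j < b ^ (m - t)) ∧
    C = {x | ∀ j, x j ∈ Set.Ico ((k j : ℝ) / b ^ (m - t)) (((k j : ℝ) + 1) / b ^ (m - t))}

/-- An abstract scrambled `(t,m,d)`-net in base `b`. -/
def IsAbstractScrambledNet {Ω : Type*} [MeasurableSpace Ω] (μ : Measure Ω)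
    (b d m t : ℕ) (Y : Fin (b ^ m) → Ω → (Fin d → ℝ)) : Prop :=
  (∀ᵐ ω ∂μ, IsNet b d m t fun n => Y n ω) ∧
  (∀ i C, IsBasicCube b d m t C → μ {ω | Y i ω ∈ C} = ((b : ℝ≥0∞) ^ (d * (m - t)))⁻¹) ∧
  (∀ M : Set (Fin d → ℝ), MeasurableSet M →
    ∀ J : Finset (Fin (b ^ m)), J.Nonempty →
    ∀ C : Fin (b ^ m) → Set (Fin d → ℝ), (∀ j ∈ J, IsBasicCube b d m t (C j)) →
      μ (⋂ j ∈ J, {ω | Y j ω ∈ C j}) ≠ 0 →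
      (μ[|⋂ j ∈ J, {ω | Y j ω ∈ C j}]) (⋂ j ∈ J, {ω | Y j ω ∈ M}) =
        ∏ j ∈ J, volume (M ∩ C j) / volume (C j))

open scoped Nat

theorem measurableSet_anchoredBox {d : ℕ} (a : Fin d → ℝ) : MeasurableSet (anchoredBox a) := by
  simpa [anchoredBox, Set.pi] using
    MeasurableSet.univ_pi fun i => measurableSet_Ico (a := 0) (b := a i)

def cornerShell (d : ℕ) (ε : ℝ) : Set (Fin d → ℝ) :=
  anchoredBox (fun _ => ((d : ℝ) - 1) / d + ε) \ anchoredBox (fun _ => ((d : ℝ) - 1) / d)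

theorem mem_cornerShell_iff {d : ℕ} {ε : ℝ} (hε : 0 ≤ ε) {x u : Fin d → ℝ} {k : Fin d → ℕ}
    {j₀ : Fin d} (hx : ∀ j, x j = (k j + u j) / d) (hk : ∀ j, k j < d)
    (hu : ∀ j, u j ∈ Set.Ico 0 1) (hj₀ : ∀ j, k j = d - 1 ↔ j = j₀) :
    x ∈ cornerShell d ε ↔ u j₀ < d * ε := by
  have hd : (0 : ℝ) < d := by exact_mod_cast j₀.pos
  have hx_nonneg : ∀ j, 0 ≤ x j := fun j => by
    rw [hx]; exact div_nonneg (add_nonneg (Nat.cast_nonneg _) (hu j).1) hd.le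
  have hx₀ : x j₀ = ((d : ℝ) - 1 + u j₀) / d := by
    have : (k j₀ : ℝ) + 1 = d := by
      exact_mod_cast (by have := hk j₀; have := (hj₀ j₀).2 rfl; omega : k j₀ + 1 = d)
    rw [hx, ← this, add_sub_cancel_right]
  have hx_lt : ∀ j ≠ j₀, x j < ((d : ℝ) - 1) / d := fun j hj => by
    have : (k j : ℝ) + 2 ≤ d := by
      exact_mod_cast (by have := hk j; have := (hj₀ j).not.2 hj; omega : k j + 2 ≤ d)
    rw [hx, div_lt_div_iff_of_pos_right hd]
    linarith [(hu j).2]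
  have hx₀_lt : x j₀ < ((d : ℝ) - 1) / d + ε ↔ u j₀ < d * ε := by
    rw [hx₀, div_add' _ _ _ hd.ne', div_lt_div_iff_of_pos_right hd, mul_comm ε]
    exact add_lt_add_iff_left _
  simp only [cornerShell, anchoredBox, Set.mem_sdiff, Set.mem_ofPred_eq, Set.mem_Ico, not_forall]
  constructor
  · rintro ⟨hB, -⟩
    exact hx₀_lt.1 (hB j₀).2
  · intro hu₀
    refine ⟨fun j => ⟨hx_nonneg j, ?_⟩, j₀, fun hA => ?_⟩
    · rcases eq_or_ne j j₀ with rfl | hj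
      · exact hx₀_lt.2 hu₀
      · linarith [hx_lt j hj]
    · have : ((d : ℝ) - 1) / d ≤ x j₀ := by
        rw [hx₀]; gcongr; linarith [(hu j₀).1]
      linarith [hA.2]

theorem Equiv.Perm.existsUnique_apply_eq_of_forall_exists {α : Type*} [Finite α]
    {σ : α → Equiv.Perm α} {t : α} (h : ∀ i, ∃ j, σ j i = t) (i : α) : ∃! j, σ j i = t := by
  have hsurj : Function.Surjective fun j => (σ j).symm t := fun i =>
    (h i).imp fun j hj => (σ j).symm_apply_eq.2 hj.symm
  obtain ⟨j, hj⟩ := h i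
  refine ⟨j, hj, fun j' hj' => Finite.injective_iff_surjective.2 hsurj ?_⟩
  rw [(σ j').symm_apply_eq.2 hj'.symm, (σ j).symm_apply_eq.2 hj.symm]

theorem cond_biUnion_of_measure_inter_eq_mul {Ω ι : Type*} [MeasurableSpace Ω] {μ : Measure Ω}
    [IsFiniteMeasure μ] {s : Finset ι} {B : ι → Set Ω} (hdisj : (s : Set ι).PairwiseDisjoint B)
    (hB : ∀ i ∈ s, NullMeasurableSet (B i) μ) {A : Set Ω} (hA : NullMeasurableSet A μ)
    {c : ℝ≥0∞} (hc : ∀ i ∈ s, μ (B i ∩ A) = c * μ (B i)) (h0 : μ (⋃ i ∈ s, B i) ≠ 0) :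
    μ[A | ⋃ i ∈ s, B i] = c := by
  have hAB : μ (A ∩ ⋃ i ∈ s, B i) = c * μ (⋃ i ∈ s, B i) := by
    rw [Set.inter_comm, Set.iUnion₂_inter,
      measure_biUnion_finset₀ (hdisj.mono fun i => Set.inter_subset_left).aedisjoint
        fun i hi => (hB i hi).inter hA,
      measure_biUnion_finset₀ hdisj.aedisjoint hB, Finset.mul_sum]
    exact Finset.sum_congr rfl hc
  rw [ProbabilityTheory.cond, Measure.smul_apply,
    Measure.restrict_apply₀' (s.nullMeasurableSet_biUnion hB), smul_eq_mul, hAB, mul_comm c,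
    ← mul_assoc, ENNReal.inv_mul_cancel h0 (measure_ne_top _ _), one_mul]

namespace IsLHS

section

variable {Ω : Type*} [MeasurableSpace Ω] {μ : Measure Ω} {d N : ℕ} {X : Fin N → Ω → Fin d → ℝ}
  {π : Fin d → Ω → Equiv.Perm (Fin N)} {U : Fin N → Ω → Fin d → ℝ}

theorem aemeasurable_perm (h : IsLHS μ d N X π U) (j : Fin d) : AEMeasurable (π j) μ :=
  AEMeasurable.of_map_ne_zero <| by rw [h.1 j]; exact IsProbabilityMeasure.ne_zero _

theorem aemeasurable_unif (h : IsLHS μ d N X π U) (n : Fin N) (j : Fin d) :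
    AEMeasurable (fun ω => U n ω j) μ :=
  AEMeasurable.of_map_ne_zero <| by simp [h.2.1 n j, Measure.restrict_eq_zero]

theorem aemeasurable (h : IsLHS μ d N X π U) (n : Fin N) : AEMeasurable (X n) μ := by
  have hX : X n = fun ω j => (((π j ω n : ℕ) : ℝ) + U n ω j) / N :=
    funext₂ fun ω j => h.2.2.2 n j ω
  rw [hX]
  exact aemeasurable_pi_lambda _ fun j =>
    (((measurable_from_top (f := fun s : Equiv.Perm (Fin N) => ((s n : ℕ) : ℝ))).comp_aemeasurable
      (h.aemeasurable_perm j)).add (h.aemeasurable_unif n j)).div_const _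

theorem measure_perm_preimage_singleton (h : IsLHS μ d N X π U) (j : Fin d)
    (σ : Equiv.Perm (Fin N)) : μ (π j ⁻¹' {σ}) = ((N ! : ℕ) : ℝ≥0∞)⁻¹ := by
  rw [← Measure.map_apply_of_aemeasurable (h.aemeasurable_perm j) (measurableSet_singleton σ),
    h.1 j, PMF.toMeasure_apply_singleton _ _ (measurableSet_singleton σ),
    PMF.uniformOfFintype_apply, Fintype.card_perm, Fintype.card_fin]

theorem measure_unif_mem_Ico (h : IsLHS μ d N X π U) (n : Fin N) (j : Fin d) {c : ℝ}
    (hc : c ≤ 1) : μ {ω | U n ω j ∈ Set.Ico 0 c} = ENNReal.ofReal c := by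
  change μ ((fun ω => U n ω j) ⁻¹' Set.Ico 0 c) = _
  rw [← Measure.map_apply_of_aemeasurable (h.aemeasurable_unif n j) measurableSet_Ico,
    h.2.1 n j, Measure.restrict_apply measurableSet_Ico, Set.Ico_inter_Ico, max_self,
    min_eq_left hc, Real.volume_Ico, sub_zero]

theorem ae_unif_mem_Ico (h : IsLHS μ d N X π U) : ∀ᵐ ω ∂μ, ∀ n j, U n ω j ∈ Set.Ico 0 1 := by
  refine ae_all_iff.2 fun n => ae_all_iff.2 fun j => ae_of_ae_map (h.aemeasurable_unif n j) ?_
  rw [h.2.1 n j]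
  exact ae_restrict_mem measurableSet_Ico

theorem measure_perm_inter_unif_mem_Ico (h : IsLHS μ d N X π U) (σ : Fin d → Equiv.Perm (Fin N))
    (S : Finset (Fin N)) (jn : Fin N → Fin d) {c : ℝ} (hc : c ≤ 1) :
    μ ((⋂ j, π j ⁻¹' {σ j}) ∩ ⋂ n ∈ S, {ω | U n ω (jn n) ∈ Set.Ico 0 c}) =
      ((N ! : ℕ) : ℝ≥0∞)⁻¹ ^ d * ENNReal.ofReal c ^ S.card := by
  let sets : (i : Fin d ⊕ (Fin N × Fin d)) → Set (lhsβ d N i) := fun i => match i with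
    | .inl j => ({σ j} : Set (Equiv.Perm (Fin N)))
    | .inr _ => (Set.Ico 0 c : Set ℝ)
  have hsets : ∀ i, MeasurableSet[lhsMS d N i] (sets i) := by
    rintro (j | p)
    exacts [MeasurableSpace.measurableSet_top, (measurableSet_Ico : MeasurableSet (Set.Ico 0 c))]
  have hinj : Set.InjOn (fun n => (n, jn n)) S := fun _ _ _ _ hnm => congrArg Prod.fst hnm
  have key := h.2.2.1.measure_inter_preimage_eq_mul
    (Finset.univ.disjSum (S.image fun n => (n, jn n))) fun i _ => hsets i
  convert key using 1
  · congr 1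
    ext ω
    simp only [Set.mem_Ico, Set.mem_inter_iff, Set.mem_iInter, Set.mem_preimage,
      Set.mem_singleton_iff, Set.mem_ofPred_eq, Finset.mem_disjSum, Finset.mem_univ, true_and,
      Finset.mem_image, exists_exists_and_eq_and, lhsFun, Sum.forall, Sum.inl.injEq, exists_eq,
      reduceCtorEq, and_false, exists_false, or_false, forall_const, Sum.inr.injEq, false_or,
      forall_exists_index, and_imp, forall_apply_eq_imp_iff₂, sets]
    exact Iff.rfl
  · rw [Finset.prod_disjSum, Finset.prod_image hinj]
    refine (congr_arg₂ (· * ·) ?_ ?_).symm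
    · exact (Finset.prod_congr rfl fun j _ => h.measure_perm_preimage_singleton j (σ j)).trans
        (by simp)
    · exact (Finset.prod_congr rfl fun n _ => h.measure_unif_mem_Ico n (jn n) hc).trans
        (by simp)

end

section

variable {Ω : Type*} [MeasurableSpace Ω] {μ : Measure Ω} {d : ℕ} {X : Fin d → Ω → Fin d → ℝ}
  {π : Fin d → Ω → Equiv.Perm (Fin d)} {U : Fin d → Ω → Fin d → ℝ}

theorem measure_perm_inter_cornerShell (h : IsLHS μ d d X π U) {ε : ℝ} (hε : 0 ≤ ε)
    (hdε : d * ε ≤ 1) {t : Fin d} (ht : (t : ℕ) = d - 1) {σ : Fin d → Equiv.Perm (Fin d)}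
    (hσ : ∀ i, ∃ j, σ j i = t) (S : Finset (Fin d)) :
    μ ((⋂ j, π j ⁻¹' {σ j}) ∩ ⋂ n ∈ S, {ω | X n ω ∈ cornerShell d ε}) =
      ((d ! : ℕ) : ℝ≥0∞)⁻¹ ^ d * ENNReal.ofReal (d * ε) ^ S.card := by
  choose jn hjn using Equiv.Perm.existsUnique_apply_eq_of_forall_exists hσ
  rw [← h.measure_perm_inter_unif_mem_Ico σ S jn hdε]
  refine measure_congr <| eventuallyEq_set.2 ?_
  filter_upwards [h.ae_unif_mem_Ico] with ω hU
  simp only [Set.mem_inter_iff, Set.mem_iInter, Set.mem_preimage, Set.mem_singleton_iff,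
    Set.mem_ofPred_eq]
  refine and_congr_right fun hπ => forall₂_congr fun n _ => (mem_cornerShell_iff hε
    (fun j => by rw [h.2.2.2, hπ]) (fun j => (σ j n).isLt) (hU n) fun j => ?_).trans
    (and_iff_right (hU n (jn n)).1).symm
  rw [← ht, ← Fin.ext_iff]
  exact ⟨(hjn n).2 j, fun hj => hj ▸ (hjn n).1⟩

theorem cond_forall_mem_cornerShell [IsFiniteMeasure μ] (h : IsLHS μ d d X π U) {ε : ℝ}
    (hε : 0 ≤ ε) (hdε : d * ε ≤ 1) {t : Fin d} (ht : (t : ℕ) = d - 1) (S : Finset (Fin d)) :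
    μ[⋂ n ∈ S, {ω | X n ω ∈ cornerShell d ε} | {ω | ∀ i, ∃ j, π j ω i = t}] =
      ENNReal.ofReal (d * ε) ^ S.card := by
  let G := Finset.univ.filter fun σ : Fin d → Equiv.Perm (Fin d) => ∀ i, ∃ j, σ j i = t
  have hE : {ω | ∀ i, ∃ j, π j ω i = t} = ⋃ σ ∈ G, ⋂ j, π j ⁻¹' {σ j} := by
    ext ω
    simp only [Set.mem_ofPred_eq, Set.mem_iUnion, Set.mem_iInter, Set.mem_preimage,
      Set.mem_singleton_iff, Finset.mem_filter, Finset.mem_univ, true_and, G, exists_prop]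
    refine ⟨fun hω => ⟨fun j => π j ω, hω, fun _ => rfl⟩, ?_⟩
    rintro ⟨σ, hσ, hπ⟩ i
    simpa only [hπ] using hσ i
  have hatom : ∀ σ ∈ G, μ (⋂ j, π j ⁻¹' {σ j}) = ((d ! : ℕ) : ℝ≥0∞)⁻¹ ^ d := fun σ hσ => by
    simpa using h.measure_perm_inter_cornerShell hε hdε ht (Finset.mem_filter.1 hσ).2 ∅
  have hswap : (fun j => Equiv.swap j t) ∈ G :=
    Finset.mem_filter.2 ⟨Finset.mem_univ _, fun i => ⟨i, Equiv.swap_apply_left i t⟩⟩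
  rw [hE]
  refine cond_biUnion_of_measure_inter_eq_mul ?_ (fun σ _ => .iInter fun j =>
    (h.aemeasurable_perm j).nullMeasurable (measurableSet_singleton _)) ?_ (fun σ hσ => ?_) ?_
  · intro σ _ τ _ hne
    refine Set.disjoint_left.2 fun ω hσ hτ => hne (funext fun j => ?_)
    simp only [Set.mem_iInter, Set.mem_preimage, Set.mem_singleton_iff] at hσ hτ
    rw [← hσ j, hτ j]
  · exact .biInter S.countable_toSet fun n _ =>
      (h.aemeasurable n).nullMeasurable (measurableSet_anchoredBox _ |>.diff
        (measurableSet_anchoredBox _))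
  · rw [h.measure_perm_inter_cornerShell hε hdε ht (Finset.mem_filter.1 hσ).2, hatom σ hσ,
      mul_comm]
  · refine ne_of_gt <| lt_of_lt_of_le ?_ (measure_mono (Set.subset_biUnion_of_mem hswap))
    rw [hatom _ hswap]
    exact (pow_ne_zero _ (ENNReal.inv_ne_zero.2 (ENNReal.natCast_ne_top _))).bot_lt

end

end IsLHS

/-- Conditioned on the event `E` that every `i ∈ {0,…,d-1}` has some `j`
with `π_j(i) = d-1`, each `P(X_i ∈ D | E) = dε` and `P(X_1,…,X_d ∈ D | E) = (dε)^d`. -/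
theorem stmt4 {Ω : Type*} [MeasurableSpace Ω] (μ : Measure Ω) [IsProbabilityMeasure μ]
    (d : ℕ) (hd : 2 ≤ d)
    (X : Fin d → Ω → Fin d → ℝ) (π : Fin d → Ω → Equiv.Perm (Fin d))
    (U : Fin d → Ω → Fin d → ℝ) (h : IsLHS μ d d X π U)
    (ε : ℝ) (hε : ε ∈ Set.Ioo (0 : ℝ) (1 / (d : ℝ)))
    (D : Set (Fin d → ℝ))
    (hD : D = anchoredBox (fun _ => ((d : ℝ) - 1) / d + ε) \
              anchoredBox (fun _ => ((d : ℝ) - 1) / d))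
    (E : Set Ω)
    (hE : E = {ω | ∀ i : Fin d, ∃ j : Fin d, π j ω i = ⟨d - 1, by omega⟩}) :
    (∀ i, (μ[|E]) {ω | X i ω ∈ D} = ENNReal.ofReal (d * ε)) ∧
    (μ[|E]) {ω | ∀ n, X n ω ∈ D} = ENNReal.ofReal ((d * ε) ^ d) := by
  obtain ⟨hε₀, hε₁⟩ := hε
  have hdε : (d : ℝ) * ε ≤ 1 := ((lt_div_iff₀' (by positivity)).1 hε₁).le
  have hD' : D = cornerShell d ε := hD
  subst hD' hE
  have hcond := h.cond_forall_mem_cornerShell hε₀.le hdε (t := ⟨d - 1, by omega⟩) rfl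
  refine ⟨fun i => by simpa using hcond {i}, ?_⟩
  rw [ENNReal.ofReal_pow (by positivity)]
  simpa [Set.iInter_ofPred] using hcond Finset.univ

end LHSPaper
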